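/- arXiv:2103.07333 — 4 statements merged into one kernel-verified Lean document; each statement's English description precedes it below -/
import Mathlib

section
/- Let (a_n)_{n≥0} be a bounded sequence of real numbers with the following approximate superadditivity property: for every ε > 0 there exists N ∈ ℕ such that for all n, m ≥ N one has a_{n+m} ≥ a_n − ε. Then the sequence (a_n) converges. -/
/-- A bounded real sequence which is approximately superadditive — for every `ε > 0`
there is `N` such that `a (n + m) ≥ a n - ε` whenever `n, m ≥ N` — converges. -/
theorem approx_superadditive_bounded_converges
    (a : ℕ → ℝ) (M : ℝ) (hbdd : ∀ n : ℕ, |a n| ≤ M)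
    (h : ∀ ε : ℝ, 0 < ε → ∃ N : ℕ, ∀ n m : ℕ, N ≤ n → N ≤ m →
      a n - ε ≤ a (n + m)) :
    ∃ l : ℝ, Filter.Tendsto a Filter.atTop (nhds l) := by
  have hub : Filter.IsBoundedUnder (· ≤ ·) Filter.atTop a :=
    Filter.isBoundedUnder_of ⟨M, fun n => (abs_le.mp (hbdd n)).2⟩
  have hlb : Filter.IsBoundedUnder (· ≥ ·) Filter.atTop a :=
    Filter.isBoundedUnder_of ⟨-M, fun n => (abs_le.mp (hbdd n)).1⟩
  have hcb : Filter.IsCoboundedUnder (· ≤ ·) Filter.atTop a :=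
    hlb.isCoboundedUnder_flip
  have hcb' : Filter.IsCoboundedUnder (· ≥ ·) Filter.atTop a :=
    hub.isCoboundedUnder_flip
  have key : Filter.limsup a Filter.atTop ≤ Filter.liminf a Filter.atTop := by
    have : ∀ ε : ℝ, 0 < ε →
        Filter.limsup a Filter.atTop ≤ Filter.liminf a Filter.atTop + ε := by
      intro ε hε
      obtain ⟨N, hN⟩ := h ε hε
      have h1 : ∀ n : ℕ, N ≤ n → a n - ε ≤ Filter.liminf a Filter.atTop := by
        intro n hn
        apply Filter.le_liminf_of_le hcb'
        filter_upwards [Filter.eventually_ge_atTop (n + N)] with k hk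
        have : a n - ε ≤ a (n + (k - n)) := hN n (k - n) hn (by omega)
        rwa [show n + (k - n) = k by omega] at this
      apply Filter.limsup_le_of_le hcb
      filter_upwards [Filter.eventually_ge_atTop N] with n hn
      have := h1 n hn
      linarith
    by_contra hc
    push_neg at hc
    have := this ((Filter.limsup a Filter.atTop - Filter.liminf a Filter.atTop) / 2)
      (by linarith)
    linarith
  have heq : Filter.liminf a Filter.atTop = Filter.limsup a Filter.atTop :=
    le_antisymm (Filter.liminf_le_limsup hub hlb) key
  exact ⟨_, tendsto_of_liminf_eq_limsup heq rfl hub hlb⟩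
end

section
/- Let (X, d) be a compact metric space and T : X → X a continuous map such that the forward orbit {T^n x : n ∈ ℕ} is dense in X for every x ∈ X. Then for every ε > 0 there exists N ∈ ℕ such that for every x ∈ X the finite orbit segment {x, T x, T² x, …, T^N x} is ε-dense in X, i.e., for every y ∈ X there exists 0 ≤ k ≤ N with d(T^k x, y) < ε. -/
/-- **Marcus' lemma, discrete-time form**: if every forward orbit of a continuous map
`T` of a compact metric space is dense, then for every `ε > 0` there is a uniform `N`
such that every orbit segment `{x, Tx, …, T^N x}` is `ε`-dense. -/
theorem marcus_uniform_eps_dense_discrete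
    {X : Type*} [MetricSpace X] [CompactSpace X]
    (T : X → X) (hT : Continuous T)
    (hmin : ∀ x : X, Dense (Set.range fun n : ℕ => T^[n] x))
    (ε : ℝ) (hε : 0 < ε) :
    ∃ N : ℕ, ∀ x y : X, ∃ k : ℕ, k ≤ N ∧ dist (T^[k] x) y < ε := by
  have hε2 : 0 < ε / 2 := by linarith
  -- finite ε/2-net
  obtain ⟨t0, ht0fin, htcov⟩ :=
    (Metric.totallyBounded_iff.mp (isCompact_univ (X := X)).totallyBounded) (ε / 2) hε2
  set t := ht0fin.toFinset with ht
  have htmem : ∀ z, z ∈ t ↔ z ∈ t0 := fun z => ht0fin.mem_toFinset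
  -- define the nested open cover
  set U : ℕ → Set X := fun N =>
    ⋂ z ∈ t, ⋃ k ∈ Finset.range (N + 1), (fun x => T^[k] x) ⁻¹' Metric.ball z (ε / 2)
    with hU
  have hUopen : ∀ N, IsOpen (U N) := by
    intro N
    refine isOpen_biInter_finset fun z _ => ?_
    exact isOpen_biUnion fun k _ =>
      (Metric.isOpen_ball).preimage (hT.iterate k)
  have hUmono : Monotone U := by
    intro a b hab x hx
    simp only [hU, Set.mem_iInter, Set.mem_iUnion] at hx ⊢
    intro z hz
    obtain ⟨k, hk, hkx⟩ := hx z hz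
    exact ⟨k, by simp only [Finset.mem_range] at hk ⊢; omega, hkx⟩
  have hUcov : (Set.univ : Set X) ⊆ ⋃ N, U N := by
    intro x _
    -- for each z in t, find n with T^[n] x close to z
    have h : ∀ z ∈ t, ∃ n : ℕ, dist (T^[n] x) z < ε / 2 := by
      intro z _
      have := (hmin x).exists_mem_open Metric.isOpen_ball
        ⟨z, Metric.mem_ball_self hε2⟩
      obtain ⟨w, ⟨n, rfl⟩, hw⟩ := this
      exact ⟨n, by simpa [dist_comm] using hw⟩
    classical
    choose n hn using h
    refine Set.mem_iUnion.mpr ⟨t.sup fun z => if hz : z ∈ t then n z hz else 0, ?_⟩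
    simp only [hU, Set.mem_iInter, Set.mem_iUnion]
    intro z hz
    refine ⟨n z hz, ?_, hn z hz⟩
    simp only [Finset.mem_range]
    have : n z hz ≤ t.sup fun z => if hz : z ∈ t then n z hz else 0 := by
      have := Finset.le_sup (f := fun z => if hz : z ∈ t then n z hz else 0) hz
      simpa [hz] using this
    omega
  -- compactness: one N suffices
  obtain ⟨s, hs⟩ := (isCompact_univ (X := X)).elim_finite_subcover U hUopen hUcov
  set N := s.sup id with hN
  have hsub : (Set.univ : Set X) ⊆ U N := by
    intro x hx
    obtain ⟨_, ⟨n, rfl⟩, _, ⟨hn, rfl⟩, hxn⟩ := hs hx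
    exact hUmono (Finset.le_sup (f := id) hn) hxn
  refine ⟨N, fun x y => ?_⟩
  have hx := hsub (Set.mem_univ x)
  obtain ⟨z, hz, hyz⟩ : ∃ z ∈ t, dist y z < ε / 2 := by
    have := htcov (Set.mem_univ y)
    simp only [Set.mem_iUnion, Metric.mem_ball] at this
    obtain ⟨z, hz, hyz⟩ := this
    exact ⟨z, (htmem z).mpr hz, hyz⟩
  simp only [hU, Set.mem_iInter, Set.mem_iUnion] at hx
  obtain ⟨k, hk, hkx⟩ := hx z hz
  simp only [Finset.mem_range] at hk
  refine ⟨k, by omega, ?_⟩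
  have : dist (T^[k] x) z < ε / 2 := hkx
  calc dist (T^[k] x) y ≤ dist (T^[k] x) z + dist z y := dist_triangle _ _ _
    _ < ε / 2 + ε / 2 := by rw [dist_comm z y]; linarith
    _ = ε := by ring
end

section
/- Let (X, d) be a compact metric space and let Φ = (Φ_t)_{t∈ℝ} be a continuous flow on X (i.e., the map ℝ × X → X, (t,x) ↦ Φ_t(x), is continuous, Φ_0 = id, and Φ_{s+t} = Φ_s ∘ Φ_t for all s, t) such that the forward orbit {Φ_t(x) : t ≥ 0} is dense in X for every x ∈ X. Then for every ε > 0 there exists T > 0 such that for every x ∈ X the orbit segment {Φ_t(x) : t ∈ [0, T]} is ε-dense in X, i.e., for every y ∈ X there exists t ∈ [0, T] with d(Φ_t(x), y) < ε. -/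
open Topology Filter


/-- **Marcus' lemma, continuous-time form**: if every forward orbit of a continuous
flow `Φ` on a compact metric space is dense, then for every `ε > 0` there is a uniform
`T > 0` such that every orbit segment `{Φ_t x : t ∈ [0, T]}` is `ε`-dense. -/
theorem marcus_uniform_eps_dense_flow
    {X : Type*} [MetricSpace X] [CompactSpace X]
    (Φ : ℝ → X → X)
    (hcont : Continuous fun p : ℝ × X => Φ p.1 p.2)
    (h0 : ∀ x : X, Φ 0 x = x)
    (hadd : ∀ s t : ℝ, ∀ x : X, Φ (s + t) x = Φ s (Φ t x))
    (hmin : ∀ x : X, Dense ((fun t : ℝ => Φ t x) '' Set.Ici (0 : ℝ)))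
    (ε : ℝ) (hε : 0 < ε) :
    ∃ T : ℝ, 0 < T ∧ ∀ x y : X, ∃ t ∈ Set.Icc (0 : ℝ) T, dist (Φ t x) y < ε := by
  classical
  by_cases hX : Nonempty X
  swap
  · exact ⟨1, one_pos, fun x => absurd ⟨x⟩ hX⟩
  have hε3 : 0 < ε / 3 := by linarith
  -- finite ε/3-net
  obtain ⟨s, -, hsfin, hscov⟩ :=
    finite_cover_balls_of_compact (isCompact_univ (X := X)) hε3
  set s' : Finset X := hsfin.toFinset with hs'
  -- for each x and each net point y, a nonnegative time hitting the ε/3-ball around y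
  have key : ∀ x y : X, ∃ t : ℝ, 0 ≤ t ∧ dist (Φ t x) y < ε / 3 := by
    intro x y
    obtain ⟨p, hp, hpball⟩ := (hmin x).exists_mem_open Metric.isOpen_ball
      ⟨y, Metric.mem_ball_self hε3⟩
    obtain ⟨t, ht, rfl⟩ := hp
    exact ⟨t, ht, hpball⟩
  choose tf htf0 htfd using key
  -- for each x, the max time over the net
  have hs'ne : s'.Nonempty := by
    rcases hX with ⟨x0⟩
    have := hscov (Set.mem_univ x0)
    simp only [Set.mem_iUnion] at this
    obtain ⟨y, hy, -⟩ := this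
    exact ⟨y, by simpa [hs'] using hy⟩
  set Tx : X → ℝ := fun x => s'.sup' hs'ne (tf x) with hTx
  -- neighborhoods
  set U : X → Set X := fun x => {x' | ∀ y ∈ s', dist (Φ (tf x y) x') y < 2 * ε / 3}
    with hU
  have hUnhds : ∀ x : X, U x ∈ 𝓝 x := by
    intro x
    have : ∀ᶠ x' in 𝓝 x, ∀ y ∈ s', dist (Φ (tf x y) x') y < 2 * ε / 3 := by
      rw [Filter.eventually_all_finset]
      intro y hy
      have hc : Continuous fun x' : X => Φ (tf x y) x' :=
        hcont.comp (continuous_const.prodMk continuous_id)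
      have hlt : dist (Φ (tf x y) x) y < 2 * ε / 3 := (htfd x y).trans (by linarith)
      have : Continuous fun x' : X => dist (Φ (tf x y) x') y :=
        (hc.dist continuous_const)
      exact (this.continuousAt).eventually_lt continuousAt_const hlt
    exact this
  obtain ⟨F, -, hFcov⟩ := isCompact_univ.elim_nhds_subcover U (fun x _ => hUnhds x)
  have hFne : F.Nonempty := by
    rcases hX with ⟨x0⟩
    have := hFcov (Set.mem_univ x0)
    simp only [Set.mem_iUnion] at this
    obtain ⟨x, hx, -⟩ := this
    exact ⟨x, hx⟩
  refine ⟨max 1 (F.sup' hFne Tx), lt_of_lt_of_le one_pos (le_max_left _ _), ?_⟩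
  intro x z
  have hx := hFcov (Set.mem_univ x)
  simp only [Set.mem_iUnion] at hx
  obtain ⟨xi, hxi, hxU⟩ := hx
  have hz := hscov (Set.mem_univ z)
  simp only [Set.mem_iUnion] at hz
  obtain ⟨y, hy, hzball⟩ := hz
  have hy' : y ∈ s' := by simpa [hs'] using hy
  refine ⟨tf xi y, ⟨htf0 xi y, ?_⟩, ?_⟩
  · calc tf xi y ≤ Tx xi := Finset.le_sup' (tf xi) hy'
    _ ≤ F.sup' hFne Tx := Finset.le_sup' Tx hxi
    _ ≤ max 1 (F.sup' hFne Tx) := le_max_right _ _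
  · have h1 : dist (Φ (tf xi y) x) y < 2 * ε / 3 := hxU y hy'
    have h2 : dist y z < ε / 3 := by
      rw [dist_comm]; exact Metric.mem_ball.mp hzball
    calc dist (Φ (tf xi y) x) z ≤ dist (Φ (tf xi y) x) y + dist y z := dist_triangle _ _ _
    _ < 2 * ε / 3 + ε / 3 := add_lt_add h1 h2
    _ = ε := by ring
end

section
/- Let (X, d) be a compact metric space and let (g_n)_{n∈ℕ} be a uniformly bounded, equicontinuous sequence of continuous real-valued functions on X. Suppose that for every nonempty open set U ⊆ X there exists c_U > 0 such that for every ε > 0 there exists N ∈ ℕ with the following property: for all n, m ≥ N and every x ∈ X there is a Borel probability measure Θ on X satisfying |g_{n+m}(x) − ∫ g_n dΘ| < ε and Θ(U) ≥ c_U. Then the sequence a_n := inf_{x∈X} g_n(x) converges to a limit a ∈ ℝ, and (g_n) converges uniformly on X to the constant function a. -/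
/-!
Write `A n = ⨅ x, g n x` and `S n = ⨆ x, g n x`. An average of `g n` is at least `A n`, so
`A n - ε ≤ A (n + m)` for large `n, m`, and a bounded sequence with this property converges, to
`a` say. For the suprema, let `x₀ n` minimise `g n` and let `z` be a cluster point of `x₀`. By
equicontinuity `g n ≤ A n + ε` on a small ball `U` around `z` for the (infinitely many) `n` with
`x₀ n` near `z`, and the averaging measures give `U` mass at least `c_U`, whence
`S (n + m) ≤ S n - c_U (S n - A n - ε) + ε'`. Hence `limsup S ≤ a`, and `A n ≤ g n ≤ S n` makes
the convergence uniform.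
-/

open MeasureTheory Filter Metric Set Topology

def HasUniformAveraging {X : Type*} [MeasurableSpace X] (g : ℕ → X → ℝ) (U : Set X) (c : ℝ) :
    Prop :=
  ∀ ε : ℝ, 0 < ε → ∃ N : ℕ, ∀ n m : ℕ, N ≤ n → N ≤ m → ∀ x : X,
    ∃ Θ : Measure X, IsProbabilityMeasure Θ ∧
      |g (n + m) x - ∫ y, g n y ∂Θ| < ε ∧ ENNReal.ofReal c ≤ Θ U

theorem abs_ciInf_le_of_forall_abs_le {ι : Type*} [Nonempty ι] {f : ι → ℝ} {M : ℝ}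
    (h : ∀ i, |f i| ≤ M) : |⨅ i, f i| ≤ M := by
  obtain ⟨i⟩ := ‹Nonempty ι›
  have hbdd : BddBelow (range f) := ⟨-M, forall_mem_range.2 fun i => (abs_le.1 (h i)).1⟩
  exact abs_le.2 ⟨le_ciInf fun i => (abs_le.1 (h i)).1, (ciInf_le hbdd i).trans (abs_le.1 (h i)).2⟩

theorem abs_ciSup_le_of_forall_abs_le {ι : Type*} [Nonempty ι] {f : ι → ℝ} {M : ℝ}
    (h : ∀ i, |f i| ≤ M) : |⨆ i, f i| ≤ M := by
  obtain ⟨i⟩ := ‹Nonempty ι›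
  have hbdd : BddAbove (range f) := ⟨M, forall_mem_range.2 fun i => (abs_le.1 (h i)).2⟩
  exact abs_le.2 ⟨(abs_le.1 (h i)).1.trans (le_ciSup hbdd i), ciSup_le fun i => (abs_le.1 (h i)).2⟩

theorem tendsto_liminf_of_forall_sub_le_add {u : ℕ → ℝ}
    (hu_le : IsBoundedUnder (· ≤ ·) atTop u) (hu_ge : IsBoundedUnder (· ≥ ·) atTop u)
    (hu : ∀ ε : ℝ, 0 < ε → ∃ N, ∀ n m, N ≤ n → N ≤ m → u n - ε ≤ u (n + m)) :
    Tendsto u atTop (𝓝 (liminf u atTop)) := by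
  refine tendsto_of_le_liminf_of_limsup_le le_rfl ?_ hu_le hu_ge
  refine le_of_forall_pos_le_add fun ε hε => ?_
  obtain ⟨N, hN⟩ := hu ε hε
  refine limsup_le_of_le hu_ge.isCoboundedUnder_le (eventually_atTop.2 ⟨N, fun n hn => ?_⟩)
  have : u n - ε ≤ liminf u atTop := by
    refine le_liminf_of_le hu_le.isCoboundedUnder_ge (eventually_atTop.2 ⟨n + N, fun k hk => ?_⟩)
    obtain ⟨j, rfl⟩ := Nat.exists_eq_add_of_le hk
    simpa only [add_assoc] using hN n (N + j) hn (Nat.le_add_right N j)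
  linarith

theorem integral_le_sub_mul_of_le_on {Ω : Type*} [MeasurableSpace Ω] {μ : Measure Ω}
    [IsProbabilityMeasure μ] {f : Ω → ℝ} {B : Set Ω} {c K S : ℝ} (hf : Integrable f μ)
    (hB : MeasurableSet B) (hc : c ≤ μ.real B) (hKS : K ≤ S) (hfB : ∀ x ∈ B, f x ≤ K)
    (hfS : ∀ x, f x ≤ S) :
    ∫ x, f x ∂μ ≤ S - c * (S - K) := by
  have hle : ∀ x, f x ≤ B.indicator (fun _ => K - S) x + S := by
    intro x
    by_cases hx : x ∈ B
    · simpa [hx] using hfB x hx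
    · simpa [hx] using hfS x
  calc ∫ x, f x ∂μ ≤ ∫ x, (B.indicator (fun _ => K - S) x + S) ∂μ :=
        integral_mono hf (((integrable_const _).indicator hB).add (integrable_const _)) hle
    _ = S - μ.real B * (S - K) := by
        rw [integral_add ((integrable_const _).indicator hB) (integrable_const _),
          integral_indicator_const _ hB, integral_const, probReal_univ, smul_eq_mul, smul_eq_mul]
        ring
    _ ≤ S - c * (S - K) := by nlinarith

theorem Continuous.exists_forall_mem_ball_lt_iInf_add {X : Type*} [MetricSpace X]
    [CompactSpace X] [Nonempty X] {f : X → ℝ} (hf : Continuous f) {δ ε : ℝ}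
    (hδ : ∀ x y, dist x y < δ → |f x - f y| < ε) :
    ∃ x₀, ∀ y ∈ ball x₀ δ, f y < (⨅ x, f x) + ε := by
  obtain ⟨x₀, hx₀⟩ := hf.exists_forall_le (by simp)
  refine ⟨x₀, fun y hy => ?_⟩
  have hmin : f x₀ ≤ ⨅ x, f x := le_ciInf hx₀
  have := (abs_sub_lt_iff.1 (hδ x₀ y (mem_ball'.1 hy))).2
  linarith

theorem tendstoUniformly_const_of_tendsto_of_limsup_le {ι α : Type*} {l : Filter ι}
    {F : ι → α → ℝ} {A S : ι → ℝ} {a : ℝ} (hA : Tendsto A l (𝓝 a)) (hS : limsup S l ≤ a)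
    (hS_le : IsBoundedUnder (· ≤ ·) l S) (hAF : ∀ i x, A i ≤ F i x) (hFS : ∀ i x, F i x ≤ S i) :
    TendstoUniformly F (fun _ => a) l := by
  refine Metric.tendstoUniformly_iff.2 fun ε hε => ?_
  filter_upwards [hA.eventually (lt_mem_nhds (sub_lt_self a hε)),
    eventually_lt_of_limsup_lt (hS.trans_lt (lt_add_of_pos_right a hε)) hS_le] with i hAi hSi x
  rw [Real.dist_eq, abs_sub_lt_iff]
  constructor <;> linarith [hAF i x, hFS i x]

namespace HasUniformAveraging

variable {X : Type*} [MeasurableSpace X] {g : ℕ → X → ℝ} {U : Set X} {c : ℝ}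

theorem le_one [Nonempty X] (h : HasUniformAveraging g U c) : c ≤ 1 := by
  obtain ⟨N, hN⟩ := h 1 one_pos
  obtain ⟨Θ, hΘ, -, hU⟩ := hN N N le_rfl le_rfl (Classical.arbitrary X)
  exact ENNReal.ofReal_le_one.1 (hU.trans prob_le_one)

variable [TopologicalSpace X] [CompactSpace X] [OpensMeasurableSpace X]

theorem exists_iInf_sub_le [Nonempty X] (h : HasUniformAveraging g U c)
    (hcont : ∀ n, Continuous (g n)) :
    ∀ ε : ℝ, 0 < ε → ∃ N, ∀ n m, N ≤ n → N ≤ m → (⨅ x, g n x) - ε ≤ ⨅ x, g (n + m) x := by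
  intro ε hε
  obtain ⟨N, hN⟩ := h ε hε
  refine ⟨N, fun n m hn hm => le_ciInf fun x => ?_⟩
  obtain ⟨Θ, hΘ, hclose, -⟩ := hN n m hn hm x
  have hinf : (⨅ x, g n x) ≤ ∫ y, g n y ∂Θ := by
    calc (⨅ x, g n x) = ∫ _, (⨅ x, g n x) ∂Θ := by simp
      _ ≤ ∫ y, g n y ∂Θ := integral_mono (integrable_const _)
          ((hcont n).integrable_of_hasCompactSupport (.of_compactSpace _))
          fun y => ciInf_le (isCompact_range (hcont n)).bddBelow y
  linarith [(abs_sub_lt_iff.1 hclose).2]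

theorem exists_iSup_le_sub_mul_add [Nonempty X] (h : HasUniformAveraging g U c)
    (hU : MeasurableSet U) (hcont : ∀ n, Continuous (g n)) {η : ℝ} (hη : 0 < η) :
    ∃ N, ∀ n m, N ≤ n → N ≤ m → ∀ K, K ≤ ⨆ x, g n x → (∀ y ∈ U, g n y ≤ K) →
      ⨆ x, g (n + m) x ≤ (⨆ x, g n x) - c * ((⨆ x, g n x) - K) + η := by
  obtain ⟨N, hN⟩ := h η hη
  refine ⟨N, fun n m hn hm K hKS hKU => ciSup_le fun x => ?_⟩
  obtain ⟨Θ, hΘ, hclose, hmass⟩ := hN n m hn hm x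
  have hint := integral_le_sub_mul_of_le_on
    ((hcont n).integrable_of_hasCompactSupport (.of_compactSpace _)) hU
    ((ENNReal.ofReal_le_iff_le_toReal (measure_ne_top _ _)).1 hmass) hKS hKU
    fun y => le_ciSup (isCompact_range (hcont n)).bddAbove y
  linarith [(abs_sub_lt_iff.1 hclose).1]

end HasUniformAveraging

theorem limsup_iSup_le_of_tendsto_iInf {X : Type*} [MetricSpace X] [CompactSpace X] [Nonempty X]
    [MeasurableSpace X] [OpensMeasurableSpace X] {g : ℕ → X → ℝ} {a : ℝ}
    (hcont : ∀ n, Continuous (g n))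
    (hequi : ∀ ε : ℝ, 0 < ε → ∃ δ : ℝ, 0 < δ ∧ ∀ n : ℕ, ∀ x y : X,
      dist x y < δ → |g n x - g n y| < ε)
    (havg : ∀ U : Set X, IsOpen U → U.Nonempty → ∃ c, 0 < c ∧ HasUniformAveraging g U c)
    (ha : Tendsto (fun n => ⨅ x, g n x) atTop (𝓝 a))
    (hS_le : IsBoundedUnder (· ≤ ·) atTop fun n => ⨆ x, g n x)
    (hS_ge : IsBoundedUnder (· ≥ ·) atTop fun n => ⨆ x, g n x) :
    limsup (fun n => ⨆ x, g n x) atTop ≤ a := by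
  set S := fun n => ⨆ x, g n x
  refine le_of_forall_pos_le_add fun ε hε => ?_
  obtain ⟨δ, hδ, hδε⟩ := hequi (ε / 3) (by positivity)
  choose x₀ hx₀ using fun n => (hcont n).exists_forall_mem_ball_lt_iInf_add (hδε n)
  obtain ⟨z, hz⟩ := exists_clusterPt_of_compactSpace (map x₀ atTop)
  obtain ⟨c, hc, hU⟩ := havg (ball z (δ / 2)) isOpen_ball (nonempty_ball.2 (half_pos hδ))
  have hη : 0 < c * (ε / 3) := by positivity
  obtain ⟨N, hN⟩ := hU.exists_iSup_le_sub_mul_add measurableSet_ball hcont hη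
  obtain ⟨n, ⟨⟨hnN, hAn⟩, hSn⟩, hzn⟩ := (((eventually_ge_atTop N).and
    (ha.eventually (gt_mem_nhds (lt_add_of_pos_right a hη)))).and
    (eventually_lt_of_limsup_lt (lt_add_of_pos_right _ hη) hS_le)).and_frequently
    (MapClusterPt.frequently hz (ball_mem_nhds z (half_pos hδ))) |>.exists
  set K := min ((⨅ x, g n x) + ε / 3) (S n)
  have hKU : ∀ y ∈ ball z (δ / 2), g n y ≤ K := fun y hy =>
    le_min (hx₀ n y (ball_subset_ball' (by linarith [mem_ball'.1 hzn]) hy)).le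
      (le_ciSup (isCompact_range (hcont n)).bddAbove y)
  have hlimsup : limsup S atTop ≤ S n - c * (S n - K) + c * (ε / 3) := by
    refine limsup_le_of_le hS_ge.isCoboundedUnder_le (eventually_atTop.2 ⟨n + N, fun k hk => ?_⟩)
    obtain ⟨j, rfl⟩ := Nat.exists_eq_add_of_le hk
    simpa only [add_assoc] using hN n (N + j) hnN (Nat.le_add_right N j) K (min_le_right _ _) hKU
  have hc1 := hU.le_one
  have : c * limsup S atTop ≤ c * (a + ε) := by
    nlinarith [mul_le_mul_of_nonneg_left hSn.le (sub_nonneg.2 hc1),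
      mul_le_mul_of_nonneg_left (min_le_left ((⨅ x, g n x) + ε / 3) (S n)) hc.le,
      mul_le_mul_of_nonneg_left hAn.le hc.le]
  exact le_of_mul_le_mul_left this hc

theorem uniform_convergence_to_constant_of_averaging_general
    {X : Type*} [MetricSpace X] [CompactSpace X]
    [MeasurableSpace X] [BorelSpace X]
    (g : ℕ → X → ℝ)
    (M : ℝ) (hbdd : ∀ n : ℕ, ∀ x : X, |g n x| ≤ M)
    (hequi : ∀ ε : ℝ, 0 < ε → ∃ δ : ℝ, 0 < δ ∧ ∀ n : ℕ, ∀ x y : X,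
      dist x y < δ → |g n x - g n y| < ε)
    (havg : ∀ U : Set X, IsOpen U → U.Nonempty → ∃ cU : ℝ, 0 < cU ∧
      ∀ ε : ℝ, 0 < ε → ∃ N : ℕ, ∀ n m : ℕ, N ≤ n → N ≤ m → ∀ x : X,
        ∃ Θ : Measure X, IsProbabilityMeasure Θ ∧
          |g (n + m) x - ∫ y, g n y ∂Θ| < ε ∧ ENNReal.ofReal cU ≤ Θ U) :
    ∃ a : ℝ,
      Tendsto (fun n : ℕ => ⨅ x : X, g n x) atTop (nhds a) ∧
      TendstoUniformly g (fun _ => a) atTop := by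
  rcases isEmpty_or_nonempty X with hX | hX
  · exact ⟨0, by simp, fun _ _ => .of_forall fun _ x => isEmptyElim x⟩
  have hcont : ∀ n, Continuous (g n) := fun n =>
    (Metric.uniformContinuous_iff.2 fun ε hε =>
      (hequi ε hε).imp fun _ ⟨hδ, h⟩ => ⟨hδ, fun {x y} hxy => h n x y hxy⟩).continuous
  obtain ⟨hA_le, hA_ge⟩ := isBoundedUnder_le_abs.1 (isBoundedUnder_of
    ⟨M, fun n => abs_ciInf_le_of_forall_abs_le (hbdd n)⟩ :
      IsBoundedUnder (· ≤ ·) atTop fun n => |⨅ x, g n x|)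
  obtain ⟨hS_le, hS_ge⟩ := isBoundedUnder_le_abs.1 (isBoundedUnder_of
    ⟨M, fun n => abs_ciSup_le_of_forall_abs_le (hbdd n)⟩ :
      IsBoundedUnder (· ≤ ·) atTop fun n => |⨆ x, g n x|)
  obtain ⟨c, -, hc⟩ : ∃ c, 0 < c ∧ HasUniformAveraging g univ c :=
    havg univ isOpen_univ univ_nonempty
  have hlim := tendsto_liminf_of_forall_sub_le_add hA_le hA_ge (hc.exists_iInf_sub_le hcont)
  exact ⟨_, hlim, tendstoUniformly_const_of_tendsto_of_limsup_le hlim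
    (limsup_iSup_le_of_tendsto_iInf hcont hequi havg hlim hS_le hS_ge) hS_le
    (fun n => ciInf_le (isCompact_range (hcont n)).bddBelow)
    (fun n => le_ciSup (isCompact_range (hcont n)).bddAbove)⟩

/-- Abstract form of the SOT-convergence theorem for the averaging operators `R_n`:
a uniformly bounded equicontinuous sequence `(g_n)` on a compact metric space such
that `g_{n+m}(x)` is, up to a uniformly small error, an average of `g_n` against a
probability measure giving every fixed nonempty open set `U` mass uniformly bounded
below, converges uniformly to the constant `a = lim_n inf_x g_n(x)`. -/
theorem uniform_convergence_to_constant_of_averaging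
    {X : Type*} [MetricSpace X] [CompactSpace X] [Nonempty X]
    [MeasurableSpace X] [BorelSpace X]
    (g : ℕ → X → ℝ)
    (hcont : ∀ n : ℕ, Continuous (g n))
    (M : ℝ) (hbdd : ∀ n : ℕ, ∀ x : X, |g n x| ≤ M)
    (hequi : ∀ ε : ℝ, 0 < ε → ∃ δ : ℝ, 0 < δ ∧ ∀ n : ℕ, ∀ x y : X,
      dist x y < δ → |g n x - g n y| < ε)
    (havg : ∀ U : Set X, IsOpen U → U.Nonempty → ∃ cU : ℝ, 0 < cU ∧
      ∀ ε : ℝ, 0 < ε → ∃ N : ℕ, ∀ n m : ℕ, N ≤ n → N ≤ m → ∀ x : X,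
        ∃ Θ : Measure X, IsProbabilityMeasure Θ ∧
          |g (n + m) x - ∫ y, g n y ∂Θ| < ε ∧ ENNReal.ofReal cU ≤ Θ U) :
    ∃ a : ℝ,
      Tendsto (fun n : ℕ => ⨅ x : X, g n x) atTop (nhds a) ∧
      TendstoUniformly g (fun _ => a) atTop :=
  uniform_convergence_to_constant_of_averaging_general g M hbdd hequi havg
end
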